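/- For all positive integers r, ℓ, i, c there is a constant C = C(r,ℓ,i,c), depending only on r, ℓ, i and c, with the following property. Let G be a group generated by r elements, let x₁,…,x_ℓ ∈ G, let I ⊆ {1,…,ℓ} be non-empty with s = max(I), and suppose M is a subgroup of G of index i such that: (i) the set φ_I(M)^G has at most c elements; and (ii) φ_{I ∪ J}(M) = 1 for every non-empty J ⊆ {s+1,…,ℓ}. Then G contains a normal subgroup M* of index at most C such that φ_I(M*) = 1. -/

import Mathlib

namespace ArXiv

variable {G : Type*} [Group G]

/-- The commutator `[a,b] = a⁻¹b⁻¹ab`. -/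
def comm (a b : G) : G := a⁻¹ * b⁻¹ * a * b

/-- The left-normed commutator `[x₁,…,x_ℓ]` of a list of elements. -/
def leftComm : List G → G
  | [] => 1
  | x :: xs => xs.foldl comm x

/-- `g` is a commutator of length `ℓ`, i.e. `g = [x₁,…,x_ℓ]` for some elements. -/
def IsCommOfLength (ℓ : ℕ) (g : G) : Prop :=
  ∃ x : Fin ℓ → G, g = leftComm (List.ofFn x)

open scoped Classical in
/-- The order of an element, as an extended natural number (`⊤` for infinite order). -/
noncomputable def extOrder (g : G) : ℕ∞ :=
  if IsOfFinOrder g then (orderOf g : ℕ∞) else ⊤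

/-- `𝒟_ℓ` : the set of commutators of length `ℓ` of maximal order in `G`. -/
def maxComms (ℓ : ℕ) (G : Type*) [Group G] : Set G :=
  {d | IsCommOfLength ℓ d ∧ ∀ c : G, IsCommOfLength ℓ c → extOrder c ≤ extOrder d}

/-- A group is residually finite. -/
def ResiduallyFinite (G : Type*) [Group G] : Prop :=
  ∀ g : G, g ≠ 1 → ∃ N : Subgroup G, N.Normal ∧ N.FiniteIndex ∧ g ∉ N

/-- `G` can be generated by `r` elements. -/
def GeneratedBy (r : ℕ) (G : Type*) [Group G] : Prop :=
  ∃ S : Finset G, S.card ≤ r ∧ Subgroup.closure (S : Set G) = ⊤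

/-- `φ_I(y)` : the commutator `[z₁,…,z_ℓ]` where `z_i = y_i` for `i ∈ I` and `z_i = x_i`
otherwise. -/
def phi {ℓ : ℕ} (x : Fin ℓ → G) (I : Finset (Fin ℓ)) (y : Fin ℓ → G) : G :=
  leftComm (List.ofFn fun j => if j ∈ I then y j else x j)

/-- `φ_I(M)^G` : the set of all `G`-conjugates of values `φ_I(y)` with the `y_i` in `M`. -/
def phiConj {ℓ : ℕ} (x : Fin ℓ → G) (I : Finset (Fin ℓ)) (M : Subgroup G) : Set G :=
  {g | ∃ (y : Fin ℓ → G) (h : G), (∀ j ∈ I, y j ∈ M) ∧ g = h⁻¹ * phi x I y * h}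

/-- `G` is `d`-stable with respect to the fixed expression `d = [x₁,…,x_ℓ]`. Note that
`Fin ℓ` index `j` corresponds to the paper's index `j+1 ∈ {1,…,ℓ}`. -/
def DStable {ℓ : ℕ} (x : Fin ℓ → G) (D : Subgroup G) : Prop :=
  ∀ k : ℕ, k ≤ ℓ → ∀ N : Subgroup G, N.Normal →
    N ≤ Subgroup.centralizer {leftComm (List.ofFn x)} →
    (∀ I : Finset (Fin ℓ), I.Nonempty → (∀ j ∈ I, k ≤ (j : ℕ)) →
      ∀ y : Fin ℓ → G, (∀ j ∈ I, y j ∈ N) → phi x I y = 1) →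
    ∀ I : Finset (Fin ℓ), (∀ j ∈ I, k ≤ (j : ℕ)) →
      ∀ y : Fin ℓ → G, (∀ j, y j ∈ N) →
        leftComm (List.ofFn fun j => if (j : ℕ) + 1 = k ∨ j ∈ I then x j * y j else x j) ∈ D

/-- The lexicographic-like order on subsets of `{1,…,ℓ}` : `I < J` iff the smallest index
at which `I` and `J` differ belongs to `J`. -/
def LexLike {ℓ : ℕ} (I J : Finset (Fin ℓ)) : Prop :=
  ∃ t ∈ J, t ∉ I ∧ ∀ s : Fin ℓ, s < t → (s ∈ I ↔ s ∈ J)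

/-- A group is locally residually finite. -/
def LocallyResiduallyFinite (G : Type*) [Group G] : Prop :=
  ∀ H : Subgroup G, H.FG → ResiduallyFinite H

/-- A group is locally nilpotent. -/
def LocallyNilpotent (G : Type*) [Group G] : Prop :=
  ∀ H : Subgroup G, H.FG → Group.IsNilpotent H

section Aux

variable {G : Type*} [Group G]

/-- conjugation `v^u = u⁻¹ v u`. -/
def cj (v u : G) : G := u⁻¹ * v * u

@[simp] lemma comm_one_left (b : G) : comm (1 : G) b = 1 := by simp [comm]
@[simp] lemma comm_one_right (a : G) : comm a (1 : G) = 1 := by simp [comm]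
@[simp] lemma cj_one_right (v : G) : cj v 1 = v := by simp [cj]
@[simp] lemma cj_one_left (u : G) : cj (1 : G) u = 1 := by simp [cj]

lemma comm_mul_left (u v e : G) : comm (u * v) e = cj (comm u e) v * comm v e := by
  simp only [comm, cj]; group

lemma comm_mul_right (v e m : G) : comm v (e * m) = comm v m * cj (comm v e) m := by
  simp only [comm, cj]; group

lemma comm_cj (v u e : G) : comm (cj v u) e = cj (comm v (cj e u⁻¹)) u := by
  simp only [comm, cj]; group

lemma comm_eq_one_of_commute {v m : G} (h : v * m = m * v) : comm v m = 1 := by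
  have h2 : v⁻¹ * (m⁻¹ * (v * m)) = 1 := by rw [h]; group
  simpa [comm, mul_assoc] using h2

lemma cj_mem {M : Subgroup G} (hM : M.Normal) {v : G} (hv : v ∈ M) (u : G) : cj v u ∈ M := by
  simpa [cj] using hM.conj_mem v hv u⁻¹

lemma comm_mem_left {M : Subgroup G} (hM : M.Normal) {v : G} (hv : v ∈ M) (e : G) :
    comm v e ∈ M := by
  have : comm v e = v⁻¹ * cj v e := by simp [comm, cj]; group
  rw [this]; exact M.mul_mem (M.inv_mem hv) (cj_mem hM hv e)

lemma comm_mem_right {M : Subgroup G} (hM : M.Normal) {e : G} (he : e ∈ M) (v : G) :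
    comm v e ∈ M := by
  have : comm v e = cj e⁻¹ v * e := by simp only [comm, cj]
  rw [this]; exact M.mul_mem (cj_mem hM (M.inv_mem he) v) he

section Chains

variable (M : Subgroup G) (X : ℕ → G)

/-- "v dies under every aligned chain with at least one M-entry, generous alphabet". -/
def chA : ℕ → ℕ → G → Prop
  | 0, _, v => v = 1
  | k + 1, t, v => ∀ m ∈ M, chA k (t + 1) (comm v m) ∧ chA k (t + 1) (comm v (X t * m))

/-- "v is alive: all M-deviations die, and the final pure value is M-central". -/
def alv : ℕ → ℕ → G → Prop
  | 0, _, v => ∀ m ∈ M, comm v m = 1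
  | k + 1, t, v => (∀ m ∈ M, chA M X k (t + 1) (comm v m)) ∧
      (∀ m ∈ M, alv k (t + 1) (comm v (X t * m)))

/-- fold of `comm` along a choice function `cf` over slots `t, t+1, …, t+k-1`. -/
def cF (cf : ℕ → G) : ℕ → ℕ → G → G
  | 0, _, v => v
  | k + 1, t, v => cF cf k (t + 1) (comm v (cf t))

variable {M X}

lemma chA_one : ∀ k t, chA M X k t (1 : G)
  | 0, _ => rfl
  | k + 1, t => fun m _ => by
      simp only [comm_one_left]; exact ⟨chA_one k (t+1), chA_one k (t+1)⟩

lemma chA_cj (hM : M.Normal) :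
    ∀ k t {v : G}, chA M X k t v → ∀ u ∈ M, chA M X k t (cj v u)
  | 0, t, v, hv, u, hu => by simp only [chA] at hv ⊢; simp [hv]
  | k + 1, t, v, hv, u, hu => by
      intro m hm
      constructor
      · have h1 : comm (cj v u) m = cj (comm v (cj m u⁻¹)) u := comm_cj v u m
        rw [h1]
        exact chA_cj hM k (t+1) ((hv _ (cj_mem hM hm u⁻¹)).1) u hu
      · have h1 : comm (cj v u) (X t * m) = cj (comm v (cj (X t * m) u⁻¹)) u :=
          comm_cj v u (X t * m)
        have h2 : cj (X t * m) u⁻¹ = X t * ((X t)⁻¹ * u * X t * (m * u⁻¹)) := by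
          simp [cj]; group
        have hm2 : (X t)⁻¹ * u * X t * (m * u⁻¹) ∈ M := by
          refine M.mul_mem ?_ (M.mul_mem hm (M.inv_mem hu))
          simpa using hM.conj_mem u hu (X t)⁻¹
        rw [h1, h2]
        exact chA_cj hM k (t+1) ((hv _ hm2).2) u hu

lemma chA_mul (hM : M.Normal) :
    ∀ k t {v v' : G}, chA M X k t v → chA M X k t v' → v' ∈ M → chA M X k t (v * v')
  | 0, t, v, v', hv, hv', _ => by
      simp only [chA] at hv hv' ⊢; simp [hv, hv']
  | k + 1, t, v, v', hv, hv', hv'M => by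
      intro m hm
      constructor
      · rw [comm_mul_left]
        exact chA_mul hM k (t+1) (chA_cj hM k (t+1) ((hv m hm).1) v' hv'M)
          ((hv' m hm).1) (comm_mem_left hM hv'M _)
      · rw [comm_mul_left]
        exact chA_mul hM k (t+1) (chA_cj hM k (t+1) ((hv m hm).2) v' hv'M)
          ((hv' m hm).2) (comm_mem_left hM hv'M _)

end Chains

section Chains2

variable {G : Type*} [Group G] {M : Subgroup G} {X : ℕ → G}

lemma alv_cj (hM : M.Normal) :
    ∀ k t {v : G}, alv M X k t v → ∀ u ∈ M, alv M X k t (cj v u)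
  | 0, t, v, hv, u, hu => by
      simp only [alv] at hv ⊢
      intro m hm
      rw [comm_cj, hv _ (cj_mem hM hm u⁻¹)]
      simp
  | k + 1, t, v, hv, u, hu => by
      simp only [alv] at hv ⊢
      constructor
      · intro m hm
        rw [comm_cj]
        exact chA_cj hM k (t+1) (hv.1 _ (cj_mem hM hm u⁻¹)) u hu
      · intro m hm
        rw [comm_cj]
        have h2 : cj (X t * m) u⁻¹ = X t * ((X t)⁻¹ * u * X t * (m * u⁻¹)) := by
          simp [cj]; group
        have hm2 : (X t)⁻¹ * u * X t * (m * u⁻¹) ∈ M := by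
          refine M.mul_mem ?_ (M.mul_mem hm (M.inv_mem hu))
          simpa using hM.conj_mem u hu (X t)⁻¹
        rw [h2]
        exact alv_cj hM k (t+1) (hv.2 _ hm2) u hu

lemma chA_alv : ∀ k t {v : G}, chA M X k t v → alv M X k t v
  | 0, t, v, hv => by
      simp only [chA] at hv; subst hv
      simp only [alv]; intro m hm; simp
  | k + 1, t, v, hv => by
      simp only [chA] at hv
      simp only [alv]
      exact ⟨fun m hm => (hv m hm).1, fun m hm => chA_alv k (t+1) (hv m hm).2⟩

lemma alv_mul (hM : M.Normal) :
    ∀ k t {v v' : G}, alv M X k t v → alv M X k t v' → v ∈ M → v' ∈ M →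
      alv M X k t (v * v')
  | 0, t, v, v', hv, hv', hvM, hv'M => by
      simp only [alv] at hv hv' ⊢
      intro m hm
      rw [comm_mul_left, hv m hm, hv' m hm]
      simp
  | k + 1, t, v, v', hv, hv', hvM, hv'M => by
      simp only [alv] at hv hv' ⊢
      constructor
      · intro m hm
        rw [comm_mul_left]
        exact chA_mul hM k (t+1) (chA_cj hM k (t+1) (hv.1 m hm) v' hv'M)
          (hv'.1 m hm) (comm_mem_left hM hv'M _)
      · intro m hm
        rw [comm_mul_left]
        exact alv_mul hM k (t+1) (alv_cj hM k (t+1) (hv.2 m hm) v' hv'M)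
          (hv'.2 m hm) (cj_mem hM (comm_mem_left hM hvM _) v') (comm_mem_left hM hv'M _)

lemma cF_chA : ∀ k t {v : G}, chA M X k t v → cF X k t v = 1
  | 0, t, v, hv => hv
  | k + 1, t, v, hv => by
      simp only [cF]
      have := (hv 1 M.one_mem).2
      rw [mul_one] at this
      exact cF_chA k (t+1) this

lemma cF_mul_cj (hM : M.Normal) :
    ∀ k t, (∀ {v v' : G}, alv M X k t v → alv M X k t v' → v ∈ M → v' ∈ M →
        cF X k t (v * v') = cF X k t v * cF X k t v') ∧
      (∀ {v : G} (u : G), alv M X k t v → v ∈ M → u ∈ M → cF X k t (cj v u) = cF X k t v)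
  | 0, t => by
      constructor
      · intro v v' _ _ _ _; simp [cF]
      · intro v u hv hvM huM
        simp only [alv] at hv
        simp only [cF]
        have h1 : cj v u = v * comm v u := by simp [cj, comm]; group
        rw [h1, hv u huM, mul_one]
  | k + 1, t => by
      have IH := cF_mul_cj hM k (t + 1)
      constructor
      · intro v v' hv hv' hvM hv'M
        simp only [alv] at hv hv'
        simp only [cF]
        have hc : comm (v * v') (X t) = cj (comm v (X t)) v' * comm v' (X t) :=
          comm_mul_left v v' (X t)
        have hav : alv M X k (t+1) (comm v (X t)) := by
          have := hv.2 1 M.one_mem; rwa [mul_one] at this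
        have hav' : alv M X k (t+1) (comm v' (X t)) := by
          have := hv'.2 1 M.one_mem; rwa [mul_one] at this
        rw [hc, IH.1 (alv_cj hM k (t+1) hav v' hv'M) hav'
            (cj_mem hM (comm_mem_left hM hvM _) v') (comm_mem_left hM hv'M _),
          IH.2 v' hav (comm_mem_left hM hvM _) hv'M]
      · intro v u hv hvM huM
        simp only [alv] at hv
        simp only [cF]
        have h1 : comm (cj v u) (X t) = cj (comm v (cj (X t) u⁻¹)) u := comm_cj v u (X t)
        have h2 : cj (X t) u⁻¹ = X t * ((X t)⁻¹ * u * X t * u⁻¹) := by simp [cj]; group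
        have hm2 : (X t)⁻¹ * u * X t * u⁻¹ ∈ M := by
          refine M.mul_mem ?_ (M.inv_mem huM)
          simpa using hM.conj_mem u huM (X t)⁻¹
        have h3 : comm v (X t * ((X t)⁻¹ * u * X t * u⁻¹)) =
            comm v ((X t)⁻¹ * u * X t * u⁻¹) * cj (comm v (X t)) ((X t)⁻¹ * u * X t * u⁻¹) :=
          comm_mul_right v (X t) _
        have hav : alv M X k (t+1) (comm v (X t)) := by
          have := hv.2 1 M.one_mem; rwa [mul_one] at this
        have hchd : chA M X k (t+1) (comm v ((X t)⁻¹ * u * X t * u⁻¹)) := hv.1 _ hm2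
        rw [h1, h2, IH.2 u _ _ huM, h3,
          IH.1 (chA_alv k (t+1) hchd) (alv_cj hM k (t+1) hav _ hm2)
            (comm_mem_left hM hvM _) (cj_mem hM (comm_mem_left hM hvM _) _),
          cF_chA k (t+1) hchd, one_mul, IH.2 _ hav (comm_mem_left hM hvM _) hm2]
        · rw [h3]
          exact alv_mul hM k (t+1) (chA_alv k (t+1) hchd) (alv_cj hM k (t+1) hav _ hm2)
            (comm_mem_left hM hvM _) (cj_mem hM (comm_mem_left hM hvM _) _)
        · rw [h3]
          exact M.mul_mem (comm_mem_left hM hvM _) (cj_mem hM (comm_mem_left hM hvM _) _)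

end Chains2

section Strict

variable {G : Type*} [Group G] {M : Subgroup G} {X : ℕ → G}

/-- strict chains: entries at slot `t` from `M ∪ {X t}`. -/
def sA (M : Subgroup G) (X : ℕ → G) : ℕ → ℕ → G → Prop
  | 0, _, v => v = 1
  | k + 1, t, v => ∀ e : G, (e ∈ M ∨ e = X t) → sA M X k (t + 1) (comm v e)

def sAlv (M : Subgroup G) (X : ℕ → G) : ℕ → ℕ → G → Prop
  | 0, _, v => ∀ m ∈ M, comm v m = 1
  | k + 1, t, v => (∀ m ∈ M, sA M X k (t + 1) (comm v m)) ∧ sAlv M X k (t + 1) (comm v (X t))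

lemma sA_chA (hM : M.Normal) :
    ∀ k t {v : G}, sA M X k t v → v ∈ M → chA M X k t v
  | 0, t, v, hv, _ => hv
  | k + 1, t, v, hv, hvM => by
      simp only [sA] at hv
      intro m hm
      constructor
      · exact sA_chA hM k (t+1) (hv m (Or.inl hm)) (comm_mem_left hM hvM m)
      · rw [comm_mul_right]
        exact chA_mul hM k (t+1)
          (sA_chA hM k (t+1) (hv m (Or.inl hm)) (comm_mem_left hM hvM m))
          (chA_cj hM k (t+1)
            (sA_chA hM k (t+1) (hv (X t) (Or.inr rfl)) (comm_mem_left hM hvM _)) m hm)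
          (cj_mem hM (comm_mem_left hM hvM _) m)

lemma sAlv_alv (hM : M.Normal) :
    ∀ k t {v : G}, sAlv M X k t v → v ∈ M → alv M X k t v
  | 0, t, v, hv, _ => hv
  | k + 1, t, v, hv, hvM => by
      simp only [sAlv] at hv
      simp only [alv]
      constructor
      · exact fun m hm => sA_chA hM k (t+1) (hv.1 m hm) (comm_mem_left hM hvM m)
      · intro m hm
        rw [comm_mul_right]
        exact alv_mul hM k (t+1)
          (chA_alv k (t+1) (sA_chA hM k (t+1) (hv.1 m hm) (comm_mem_left hM hvM m)))
          (alv_cj hM k (t+1) (sAlv_alv hM k (t+1) hv.2 (comm_mem_left hM hvM _)) m hm)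
          (comm_mem_left hM hvM m) (cj_mem hM (comm_mem_left hM hvM _) m)

lemma cF_congr {cf cf' : ℕ → G} :
    ∀ k t {v : G}, (∀ j, t ≤ j → j < t + k → cf j = cf' j) → cF cf k t v = cF cf' k t v
  | 0, t, v, _ => rfl
  | k + 1, t, v, h => by
      simp only [cF]
      rw [h t le_rfl (by omega)]
      exact cF_congr k (t+1) fun j h1 h2 => h j (by omega) (by omega)

lemma sA_of_folds :
    ∀ k t {v : G},
      (∀ cf : ℕ → G, (∀ j, cf j ∈ M ∨ cf j = X j) → cF cf k t v = 1) → sA M X k t v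
  | 0, t, v, h => h X (fun j => Or.inr rfl)
  | k + 1, t, v, h => by
      simp only [sA]
      intro e he
      refine sA_of_folds k (t+1) ?_
      intro cf hcf
      have hcf' : ∀ j, (fun j => if j = t then e else cf j) j ∈ M ∨
          (fun j => if j = t then e else cf j) j = X j := by
        intro j
        by_cases hj : j = t
        · subst hj; simpa using he
        · simpa [hj] using hcf j
      calc cF cf k (t+1) (comm v e)
          = cF (fun j => if j = t then e else cf j) k (t+1) (comm v e) :=
            cF_congr k (t+1) (fun j hj1 hj2 => by simp [show j ≠ t by omega])
        _ = cF (fun j => if j = t then e else cf j) (k+1) t v := by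
            simp only [cF]; simp
        _ = 1 := h _ hcf'

lemma sAlv_of_folds :
    ∀ k t {v : G},
      (∀ cf : ℕ → G, (∀ j, cf j ∈ M ∨ cf j = X j) →
        (∃ j, t ≤ j ∧ j < t + k ∧ cf j ∈ M) → cF cf k t v = 1) →
      (∀ u ∈ M, comm (cF X k t v) u = 1) → sAlv M X k t v
  | 0, t, v, h1, h2 => h2
  | k + 1, t, v, h1, h2 => by
      simp only [sAlv]
      constructor
      · intro m hm
        refine sA_of_folds k (t+1) ?_
        intro cf hcf
        have hcf' : ∀ j, (fun j => if j = t then m else cf j) j ∈ M ∨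
            (fun j => if j = t then m else cf j) j = X j := by
          intro j
          by_cases hj : j = t
          · subst hj; simp [hm]
          · simpa [hj] using hcf j
        calc cF cf k (t+1) (comm v m)
            = cF (fun j => if j = t then m else cf j) k (t+1) (comm v m) :=
              cF_congr k (t+1) (fun j hj1 hj2 => by simp [show j ≠ t by omega])
          _ = cF (fun j => if j = t then m else cf j) (k+1) t v := by
              simp only [cF]; simp
          _ = 1 := h1 _ hcf' ⟨t, le_rfl, by omega, by simp [hm]⟩
      · refine sAlv_of_folds k (t+1) ?_ ?_
        · intro cf hcf ⟨j0, hj0, hj0', hj0M⟩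
          have hcf' : ∀ j, (fun j => if j = t then X t else cf j) j ∈ M ∨
              (fun j => if j = t then X t else cf j) j = X j := by
            intro j
            by_cases hj : j = t
            · subst hj; simp
            · simpa [hj] using hcf j
          calc cF cf k (t+1) (comm v (X t))
              = cF (fun j => if j = t then X t else cf j) k (t+1) (comm v (X t)) :=
                cF_congr k (t+1) (fun j hj1 hj2 => by simp [show j ≠ t by omega])
            _ = cF (fun j => if j = t then X t else cf j) (k+1) t v := by
                simp only [cF]; simp
            _ = 1 := h1 _ hcf' ⟨j0, by omega, by omega,
                by simp [show j0 ≠ t by omega, hj0M]⟩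
        · intro u hu
          have : cF X k (t+1) (comm v (X t)) = cF X (k+1) t v := rfl
          rw [this]
          exact h2 u hu

end Strict

section Bridge

variable {G : Type*} [Group G]

/-- running left-normed commutator of the sequence `g 0, g 1, …`. -/
def sq (g : ℕ → G) : ℕ → G
  | 0 => g 0
  | t + 1 => comm (sq g t) (g (t + 1))

lemma sq_congr {g g' : ℕ → G} : ∀ n, (∀ j, j ≤ n → g j = g' j) → sq g n = sq g' n
  | 0, h => h 0 le_rfl
  | n + 1, h => by
      simp only [sq]
      rw [sq_congr n (fun j hj => h j (by omega)), h (n+1) le_rfl]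

lemma cF_snoc (cf : ℕ → G) : ∀ j t (v : G), comm (cF cf j t v) (cf (t + j)) = cF cf (j + 1) t v
  | 0, t, v => by simp [cF]
  | j + 1, t, v => by
      show comm (cF cf j (t+1) (comm v (cf t))) (cf (t + (j+1))) = _
      rw [show t + (j + 1) = (t + 1) + j by omega, cF_snoc cf j (t+1) (comm v (cf t))]
      rfl

lemma sq_split (g : ℕ → G) : ∀ j t0, sq g (t0 + j) = cF g j (t0 + 1) (sq g t0)
  | 0, t0 => rfl
  | j + 1, t0 => by
      have h0 : sq g (t0 + (j + 1)) = comm (sq g (t0 + j)) (g (t0 + j + 1)) := rfl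
      rw [h0, sq_split g j t0, show t0 + j + 1 = (t0 + 1) + j by omega, cF_snoc]

lemma leftComm_concat (l : List G) (e : G) (hl : l ≠ []) :
    leftComm (l.concat e) = comm (leftComm l) e := by
  obtain ⟨a, t, rfl⟩ := List.exists_cons_of_ne_nil hl
  show leftComm (a :: (t.concat e)) = _
  simp only [leftComm, List.concat_eq_append, List.foldl_append, List.foldl_cons,
    List.foldl_nil]

lemma leftComm_ofFn : ∀ (n : ℕ) (f : Fin (n + 1) → G),
    leftComm (List.ofFn f) = sq (fun t => if h : t < n + 1 then f ⟨t, h⟩ else 1) n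
  | 0, f => by
      simp [List.ofFn_succ, leftComm, sq]
  | n + 1, f => by
      rw [List.ofFn_succ' f]
      rw [leftComm_concat _ _ (by
        have : (List.ofFn fun i : Fin (n+1) => f i.castSucc).length = n + 1 :=
          List.length_ofFn
        intro hnil
        rw [hnil] at this
        simp at this)]
      rw [leftComm_ofFn n (fun i => f i.castSucc)]
      show _ = comm (sq _ n) _
      congr 1
      · refine sq_congr n fun j hj => ?_
        have hj1 : j < n + 1 := by omega
        have hj2 : j < n + 2 := by omega
        simp only [dif_pos hj1, dif_pos hj2]
        congr 1
      · simp [Fin.last]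

end Bridge

section Key

variable {G : Type*} [Group G]

theorem key_antihom {L : ℕ} (x : Fin (L + 1) → G) (I : Finset (Fin (L + 1))) (hI : I.Nonempty)
    (M2 : Subgroup G) (hM2 : M2.Normal) (Δ : Set G)
    (hval : ∀ y : Fin (L + 1) → G, (∀ j ∈ I, y j ∈ M2) → phi x I y ∈ Δ)
    (hcent : ∀ δ ∈ Δ, ∀ u ∈ M2, δ * u = u * δ)
    (hH2 : ∀ J : Finset (Fin (L + 1)), J.Nonempty → (∀ j ∈ J, I.max' hI < j) →
      ∀ y : Fin (L + 1) → G, (∀ j, y j ∈ M2) → phi x (I ∪ J) y = 1)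
    (y : Fin (L + 1) → G) (hy : ∀ j ∈ I, y j ∈ M2) :
    ∀ a b : G, a ∈ M2 → b ∈ M2 →
      phi x I (Function.update y (I.max' hI) (a * b)) =
        phi x I (Function.update y (I.max' hI) b) * phi x I (Function.update y (I.max' hI) a) := by
  classical
  intro a b ha hb
  set sI : Fin (L + 1) := I.max' hI with hsIdef
  obtain ⟨s, hs⟩ : ∃ s : ℕ, (sI : ℕ) = s := ⟨_, rfl⟩
  have hsl : s < L + 1 := hs ▸ sI.isLt
  have hsL : s ≤ L := by omega
  set X : ℕ → G := fun t => if h : t < L + 1 then x ⟨t, h⟩ else 1 with hXdef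
  set z : G → ℕ → G := fun c t => if h : t < L + 1 then
      (if (⟨t, h⟩ : Fin (L + 1)) ∈ I then Function.update y sI c ⟨t, h⟩ else x ⟨t, h⟩)
      else 1 with hzdef
  have hupdmem : ∀ c, c ∈ M2 → ∀ j ∈ I, Function.update y sI c j ∈ M2 := by
    intro c hc j hj
    by_cases hj' : j = sI
    · subst hj'; rw [Function.update_self]; exact hc
    · rw [Function.update_of_ne hj']; exact hy j hj
  have hphi : ∀ c, phi x I (Function.update y sI c) = sq (z c) L := by
    intro c
    simp only [hzdef]
    exact leftComm_ofFn L (fun j => if j ∈ I then Function.update y sI c j else x j)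
  have hzs : ∀ c, z c s = c := by
    intro c
    have hfin : (⟨s, hsl⟩ : Fin (L + 1)) = sI := by
      apply Fin.ext; exact hs.symm
    simp only [hzdef, dif_pos hsl, hfin]
    rw [if_pos (I.max'_mem hI), Function.update_self]
  have hzother : ∀ c c' t, t ≠ s → z c t = z c' t := by
    intro c c' t ht
    simp only [hzdef]
    by_cases h : t < L + 1
    · simp only [dif_pos h]
      have hne : (⟨t, h⟩ : Fin (L + 1)) ≠ sI := by
        intro hEq; apply ht
        have := congrArg (fun (u : Fin (L + 1)) => (u : ℕ)) hEq
        simpa [hs] using this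
      rw [Function.update_of_ne hne, Function.update_of_ne hne]
    · simp only [dif_neg h]
  have hnotin : ∀ (t : ℕ) (h : t < L + 1), s < t → (⟨t, h⟩ : Fin (L + 1)) ∉ I := by
    intro t h hst hmem
    have h1 := I.le_max' _ hmem
    rw [← hsIdef] at h1
    have h2 : t ≤ (sI : ℕ) := h1
    omega
  have hztail : ∀ c t, s < t → t < L + 1 → z c t = X t := by
    intro c t hst htl
    simp only [hzdef, hXdef, dif_pos htl]
    rw [if_neg (hnotin t htl hst)]
  set w : G → G := fun c => sq (z c) s with hwdef
  have hw_mem : ∀ c, c ∈ M2 → w c ∈ M2 := by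
    intro c hc
    simp only [hwdef]
    rcases Nat.eq_zero_or_pos s with hs0 | hspos
    · have h1 : sq (z c) s = z c s := by rw [hs0]; rfl
      rw [h1, hzs c]; exact hc
    · obtain ⟨s', rfl⟩ : ∃ s', s = s' + 1 := ⟨s - 1, by omega⟩
      have h1 : sq (z c) (s' + 1) = comm (sq (z c) s') (z c (s' + 1)) := rfl
      rw [h1, hzs c]
      exact comm_mem_right hM2 hc _
  have hw_mul : w (a * b) = w b * cj (w a) b := by
    simp only [hwdef]
    rcases Nat.eq_zero_or_pos s with hs0 | hspos
    · have h1 : ∀ c, sq (z c) s = c := by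
        intro c
        have h2 : sq (z c) s = z c s := by rw [hs0]; rfl
        rw [h2, hzs c]
      rw [h1, h1, h1]
      simp only [cj]; group
    · obtain ⟨s', rfl⟩ : ∃ s', s = s' + 1 := ⟨s - 1, by omega⟩
      have hexp : ∀ c, sq (z c) (s' + 1) = comm (sq (z c) s') c := by
        intro c
        have h1 : sq (z c) (s' + 1) = comm (sq (z c) s') (z c (s' + 1)) := rfl
        rw [h1, hzs c]
      have hWsame : ∀ c c', sq (z c) s' = sq (z c') s' :=
        fun c c' => sq_congr s' (fun j hj => hzother c c' j (by omega))
      rw [hexp (a * b), hexp b, hexp a, hWsame a (a * b), hWsame b (a * b)]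
      exact comm_mul_right _ a b
  have hfull : ∀ c, cF X (L - s) (s + 1) (w c) = phi x I (Function.update y sI c) := by
    intro c
    rw [hphi c]
    have h1 : sq (z c) L = sq (z c) (s + (L - s)) := by congr 1; omega
    rw [h1, sq_split (z c) (L - s) s]
    exact cF_congr (L - s) (s + 1)
      (fun t ht1 ht2 => (hztail c t (by omega) (by omega)).symm)
  have halive : ∀ c, c ∈ M2 → alv M2 X (L - s) (s + 1) (w c) := by
    intro c hc
    refine sAlv_alv hM2 (L - s) (s + 1) ?_ (hw_mem c hc)
    refine sAlv_of_folds (L - s) (s + 1) ?_ ?_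
    · intro cf hcf hex
      obtain ⟨j0, hj01, hj02, hj0M⟩ := hex
      set J : Finset (Fin (L + 1)) :=
        Finset.univ.filter (fun j : Fin (L + 1) => s < (j : ℕ) ∧ cf (j : ℕ) ∈ M2) with hJdef
      set y' : Fin (L + 1) → G := fun j =>
        if s < (j : ℕ) ∧ cf (j : ℕ) ∈ M2 then cf (j : ℕ)
        else (if j ∈ I then Function.update y sI c j else 1) with hy'def
      have hy' : ∀ j, y' j ∈ M2 := by
        intro j
        simp only [hy'def]
        by_cases h1 : s < (j : ℕ) ∧ cf (j : ℕ) ∈ M2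
        · rw [if_pos h1]; exact h1.2
        · rw [if_neg h1]
          by_cases h2 : j ∈ I
          · rw [if_pos h2]; exact hupdmem c hc j h2
          · rw [if_neg h2]; exact M2.one_mem
      have hJne : J.Nonempty := by
        have hj0l : j0 < L + 1 := by omega
        refine ⟨⟨j0, hj0l⟩, ?_⟩
        simp only [hJdef, Finset.mem_filter, Finset.mem_univ, true_and]
        exact ⟨by omega, hj0M⟩
      have hJgt : ∀ j ∈ J, I.max' hI < j := by
        intro j hj
        simp only [hJdef, Finset.mem_filter, Finset.mem_univ, true_and] at hj
        rw [← hsIdef]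
        exact Fin.lt_def.mpr (by omega)
      have h0 : phi x (I ∪ J) y' = 1 := hH2 J hJne hJgt y' hy'
      set zJ : ℕ → G := fun t => if h : t < L + 1 then
          (if (⟨t, h⟩ : Fin (L + 1)) ∈ I ∪ J then y' ⟨t, h⟩ else x ⟨t, h⟩) else 1 with hzJdef
      have hphiJ : phi x (I ∪ J) y' = sq zJ L := by
        simp only [hzJdef]
        exact leftComm_ofFn L (fun j => if j ∈ I ∪ J then y' j else x j)
      have hpre : sq zJ s = w c := by
        simp only [hwdef]
        refine sq_congr s (fun t ht => ?_)
        have htl : t < L + 1 := by omega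
        simp only [hzJdef, hzdef, dif_pos htl]
        have htJ : (⟨t, htl⟩ : Fin (L + 1)) ∉ J := by
          simp only [hJdef, Finset.mem_filter, Finset.mem_univ, true_and]
          intro hcontr
          omega
        by_cases htI : (⟨t, htl⟩ : Fin (L + 1)) ∈ I
        · rw [if_pos (Finset.mem_union_left _ htI)]
          simp only [hy'def]
          have hnotJcond : ¬(s < t ∧ cf t ∈ M2) := by
            intro hcontr; omega
          rw [if_neg hnotJcond, if_pos htI, if_pos htI]
        · rw [if_neg (by
            intro hcontr
            rcases Finset.mem_union.mp hcontr with h | h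
            · exact htI h
            · exact htJ h), if_neg htI]
      have htailJ : cF zJ (L - s) (s + 1) (sq zJ s) = cF cf (L - s) (s + 1) (sq zJ s) := by
        refine cF_congr (L - s) (s + 1) (fun t ht1 ht2 => ?_)
        have htl : t < L + 1 := by omega
        have hts : s < t := by omega
        simp only [hzJdef, dif_pos htl]
        by_cases hcfM : cf t ∈ M2
        · have htJ : (⟨t, htl⟩ : Fin (L + 1)) ∈ J := by
            simp only [hJdef, Finset.mem_filter, Finset.mem_univ, true_and]
            exact ⟨hts, hcfM⟩
          rw [if_pos (Finset.mem_union_right _ htJ)]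
          simp only [hy'def]
          rw [if_pos ⟨hts, hcfM⟩]
        · have hcfX : cf t = X t := (hcf t).resolve_left hcfM
          have htIJ : (⟨t, htl⟩ : Fin (L + 1)) ∉ I ∪ J := by
            intro hcontr
            rcases Finset.mem_union.mp hcontr with h | h
            · exact hnotin t htl hts h
            · simp only [hJdef, Finset.mem_filter, Finset.mem_univ, true_and] at h
              exact hcfM h.2
          rw [if_neg htIJ, hcfX]
          simp only [hXdef]
          rw [dif_pos htl]
      have hLsplit : sq zJ L = cF zJ (L - s) (s + 1) (sq zJ s) := by
        have h1 : sq zJ L = sq zJ (s + (L - s)) := by congr 1; omega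
        rw [h1, sq_split]
      calc cF cf (L - s) (s + 1) (w c)
          = cF cf (L - s) (s + 1) (sq zJ s) := by rw [hpre]
        _ = cF zJ (L - s) (s + 1) (sq zJ s) := htailJ.symm
        _ = sq zJ L := hLsplit.symm
        _ = phi x (I ∪ J) y' := hphiJ.symm
        _ = 1 := h0
    · intro u hu
      rw [hfull c]
      exact comm_eq_one_of_commute (hcent _ (hval _ (hupdmem c hc)) u hu)
  have hab := hfull (a * b)
  rw [hw_mul] at hab
  rw [← hab,
    (cF_mul_cj hM2 (L - s) (s + 1)).1 (halive b hb)
      (alv_cj hM2 (L - s) (s + 1) (halive a ha) b hb)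
      (hw_mem b hb) (cj_mem hM2 (hw_mem a ha) b),
    (cF_mul_cj hM2 (L - s) (s + 1)).2 b (halive a ha) (hw_mem a ha) hb,
    hfull b, hfull a]

end Key

section IndexHelpers

variable {G : Type*} [Group G]

lemma aux_index_normalCore_le (H : Subgroup G) [H.FiniteIndex] :
    H.normalCore.index ≤ Nat.factorial H.index := by
  classical
  rw [Subgroup.normalCore_eq_ker, Subgroup.index_ker]
  letI : Fintype (G ⧸ H) := H.fintypeQuotientOfFiniteIndex
  have h1 : Nat.card (MulAction.toPermHom G (G ⧸ H)).range ≤ Nat.card (Equiv.Perm (G ⧸ H)) :=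
    Nat.card_le_card_of_injective _ Subtype.val_injective
  refine h1.trans ?_
  rw [Nat.card_eq_fintype_card, Fintype.card_perm, Subgroup.index_eq_card,
    Nat.card_eq_fintype_card]

lemma aux_index_iInf_le_pow {ι : Type*} [Fintype ι] (f : ι → Subgroup G) {B : ℕ}
    (h : ∀ i, (f i).index ≤ B) : (⨅ i, f i).index ≤ B ^ Fintype.card ι := by
  refine (Subgroup.index_iInf_le f).trans ?_
  calc ∏ i, (f i).index ≤ ∏ _i : ι, B :=
        Finset.prod_le_prod (fun _ _ => Nat.zero_le _) (fun i _ => h i)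
    _ = B ^ Fintype.card ι := by rw [Finset.prod_const, Finset.card_univ]

lemma aux_index_centralizer_le {Δ : Set G} {c : ℕ} (hfin : Δ.Finite) (hc : Δ.ncard ≤ c)
    (hconj : ∀ δ ∈ Δ, ∀ g : G, g * δ * g⁻¹ ∈ Δ) {δ : G} (hδ : δ ∈ Δ) :
    (Subgroup.centralizer {δ}).index ≤ c ∧ (Subgroup.centralizer {δ}).index ≠ 0 := by
  classical
  haveI := hfin.to_subtype
  set C := Subgroup.centralizer ({δ} : Set G) with hCdef
  have hwd : ∀ a b : G, @Setoid.r G (QuotientGroup.leftRel C) a b →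
      a * δ * a⁻¹ = b * δ * b⁻¹ := by
    intro a b hab
    rw [QuotientGroup.leftRel_apply] at hab
    have hcomm : δ * (a⁻¹ * b) = (a⁻¹ * b) * δ :=
      (Subgroup.mem_centralizer_iff.mp hab) δ rfl
    calc a * δ * a⁻¹ = a * (δ * (a⁻¹ * b)) * b⁻¹ := by group
      _ = a * ((a⁻¹ * b) * δ) * b⁻¹ := by rw [hcomm]
      _ = b * δ * b⁻¹ := by group
  let F : (G ⧸ C) → ↥Δ := fun q => Quotient.liftOn' q (fun g => (⟨g * δ * g⁻¹, hconj δ hδ g⟩ : ↥Δ))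
    (fun a b hab => Subtype.ext (hwd a b hab))
  have hFinj : Function.Injective F := by
    intro q1 q2
    refine Quotient.inductionOn₂' q1 q2 ?_
    intro a b h
    apply Quotient.sound'
    rw [QuotientGroup.leftRel_apply]
    have h' : a * δ * a⁻¹ = b * δ * b⁻¹ := Subtype.ext_iff.mp h
    rw [Subgroup.mem_centralizer_iff]
    intro h'' hmem
    rw [Set.mem_singleton_iff] at hmem
    rw [hmem]
    calc δ * (a⁻¹ * b) = a⁻¹ * (a * δ * a⁻¹) * b := by group
      _ = a⁻¹ * (b * δ * b⁻¹) * b := by rw [h']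
      _ = (a⁻¹ * b) * δ := by group
  constructor
  · rw [Subgroup.index_eq_card]
    refine (Nat.card_le_card_of_injective F hFinj).trans ?_
    rw [Nat.card_coe_set_eq]
    exact hc
  · haveI : Finite (G ⧸ C) := Finite.of_injective F hFinj
    rw [Subgroup.index_eq_card]
    exact Nat.card_pos.ne'

end IndexHelpers

end Aux

/-- Lemma 4.5. `Fin ℓ` index `j` corresponds to paper index `j+1`, so the
paper's `J ⊆ {s+1,…,ℓ}` with `s = max I` means `I.max' hI < j` for all `j ∈ J`. -/
theorem stmt14 (r ℓ i c : ℕ) (hr : 0 < r) (hℓ : 0 < ℓ) (hi : 0 < i) (hc : 0 < c) :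
    ∃ C : ℕ, ∀ (G : Type) [Group G], GeneratedBy r G →
      ∀ (x : Fin ℓ → G) (I : Finset (Fin ℓ)) (hI : I.Nonempty) (M : Subgroup G),
        M.index = i →
        (phiConj x I M).Finite → (phiConj x I M).ncard ≤ c →
        (∀ J : Finset (Fin ℓ), J.Nonempty → (∀ j ∈ J, I.max' hI < j) →
          ∀ y : Fin ℓ → G, (∀ j, y j ∈ M) → phi x (I ∪ J) y = 1) →
        ∃ Mstar : Subgroup G, Mstar.Normal ∧ 0 < Mstar.index ∧ Mstar.index ≤ C ∧
          ∀ y : Fin ℓ → G, (∀ j ∈ I, y j ∈ Mstar) → phi x I y = 1 := by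
  classical
  refine ⟨Nat.factorial ((c * (Nat.factorial i * c ^ c)) ^
    (c ^ (Nat.factorial i * c ^ c * r))), ?_⟩
  intro G iG hgen x I hI M hMi hfin hcard hH2
  obtain ⟨L, rfl⟩ : ∃ L, ℓ = L + 1 := ⟨ℓ - 1, by omega⟩
  set n2b : ℕ := Nat.factorial i * c ^ c with hn2b
  have hn2bpos : 0 < n2b := Nat.mul_pos (Nat.factorial_pos i) (Nat.pow_pos hc)
  set Δ : Set G := phiConj x I M with hΔdef
  have hΔconj : ∀ δ ∈ Δ, ∀ g : G, g * δ * g⁻¹ ∈ Δ := by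
    intro δ hδ g
    rw [hΔdef] at hδ ⊢
    obtain ⟨y, h, hy, rfl⟩ := hδ
    exact ⟨y, h * g⁻¹, hy, by group⟩
  haveI hMfi : M.FiniteIndex := ⟨by rw [hMi]; exact hi.ne'⟩
  have hMcle : M.normalCore.index ≤ Nat.factorial i := by
    have h1 := aux_index_normalCore_le M
    rwa [hMi] at h1
  set Z := Subgroup.centralizer Δ with hZdef
  have hZiInf : Z = ⨅ d : ↥hfin.toFinset, Subgroup.centralizer {(d : G)} := by
    apply le_antisymm
    · refine le_iInf fun d => ?_
      intro u hu
      rw [Subgroup.mem_centralizer_iff] at hu ⊢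
      intro h hh
      rw [Set.mem_singleton_iff] at hh
      subst hh
      exact hu _ (hfin.mem_toFinset.mp d.2)
    · intro u hu
      rw [Subgroup.mem_iInf] at hu
      rw [Subgroup.mem_centralizer_iff]
      intro h hh
      have h2 := hu ⟨h, hfin.mem_toFinset.mpr hh⟩
      rw [Subgroup.mem_centralizer_iff] at h2
      exact h2 h rfl
  have hZle : Z.index ≤ c ^ c := by
    rw [hZiInf]
    have h1 : ∀ d : ↥hfin.toFinset, (Subgroup.centralizer {(d : G)}).index ≤ c :=
      fun d => (aux_index_centralizer_le hfin hcard hΔconj (hfin.mem_toFinset.mp d.2)).1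
    refine (aux_index_iInf_le_pow _ h1).trans ?_
    refine Nat.pow_le_pow_right hc ?_
    rw [Fintype.card_coe, ← Set.ncard_eq_toFinset_card _ hfin]
    exact hcard
  have hZne : Z.index ≠ 0 := by
    rw [hZiInf]
    exact (Subgroup.finiteIndex_iInf (fun d : ↥hfin.toFinset =>
      ⟨(aux_index_centralizer_le hfin hcard hΔconj (hfin.mem_toFinset.mp d.2)).2⟩)).index_ne_zero
  haveI hZfi : Z.FiniteIndex := ⟨hZne⟩
  have hZnormal : Z.Normal := by
    constructor
    intro n hn g
    rw [hZdef, Subgroup.mem_centralizer_iff] at hn ⊢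
    intro h hh
    have hh' : g⁻¹ * h * g ∈ Δ := by
      have h3 := hΔconj h hh g⁻¹
      simpa using h3
    have hcomm := hn _ hh'
    calc h * (g * n * g⁻¹) = g * ((g⁻¹ * h * g) * n) * g⁻¹ := by group
      _ = g * (n * (g⁻¹ * h * g)) * g⁻¹ := by rw [hcomm]
      _ = (g * n * g⁻¹) * h := by group
  set M2 := M.normalCore ⊓ Z with hM2def
  have hM2normal : M2.Normal := by
    constructor
    intro n hn g
    exact ⟨(Subgroup.normalCore_normal M).conj_mem n hn.1 g, hZnormal.conj_mem n hn.2 g⟩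
  haveI hM2fi : M2.FiniteIndex := by rw [hM2def]; infer_instance
  have hM2le : M2.index ≤ n2b := by
    rw [hM2def, hn2b]
    exact (Subgroup.index_inf_le).trans (Nat.mul_le_mul hMcle hZle)
  have hM2M : M2 ≤ M := le_trans inf_le_left (Subgroup.normalCore_le M)
  have hval : ∀ y : Fin (L + 1) → G, (∀ j ∈ I, y j ∈ M2) → phi x I y ∈ Δ := by
    intro y hy
    rw [hΔdef]
    exact ⟨y, 1, fun j hj => hM2M (hy j hj), by group⟩
  have hcent : ∀ δ ∈ Δ, ∀ u ∈ M2, δ * u = u * δ := by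
    intro δ hδ u hu
    exact (Subgroup.mem_centralizer_iff.mp hu.2) δ hδ
  have hH2' : ∀ J : Finset (Fin (L + 1)), J.Nonempty → (∀ j ∈ J, I.max' hI < j) →
      ∀ y : Fin (L + 1) → G, (∀ j, y j ∈ M2) → phi x (I ∪ J) y = 1 :=
    fun J hJ hJgt y hy => hH2 J hJ hJgt y (fun j => hM2M (hy j))
  have hanti := key_antihom x I hI M2 hM2normal Δ hval hcent hH2'
  set sI := I.max' hI with hsIdef
  -- derived facts about a ↦ phi x I (update y sI a)
  have hpsi1 : ∀ y : Fin (L + 1) → G, (∀ j ∈ I, y j ∈ M2) →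
      phi x I (Function.update y sI 1) = 1 := by
    intro y hy
    have h1 := hanti y hy 1 1 M2.one_mem M2.one_mem
    rw [mul_one] at h1
    exact left_eq_mul.mp h1
  have hpsiinv : ∀ y : Fin (L + 1) → G, (∀ j ∈ I, y j ∈ M2) → ∀ a, a ∈ M2 →
      phi x I (Function.update y sI a⁻¹) = (phi x I (Function.update y sI a))⁻¹ := by
    intro y hy a ha
    have h1 := hanti y hy a a⁻¹ ha (M2.inv_mem ha)
    rw [mul_inv_cancel, hpsi1 y hy] at h1
    exact eq_inv_of_mul_eq_one_left h1.symm
  have hupdM2 : ∀ y : Fin (L + 1) → G, (∀ j ∈ I, y j ∈ M2) → ∀ a, a ∈ M2 →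
      ∀ j ∈ I, Function.update y sI a j ∈ M2 := by
    intro y hy a ha j hj
    by_cases h : j = sI
    · subst h; rw [Function.update_self]; exact ha
    · rw [Function.update_of_ne h]; exact hy j hj
  have hpsival : ∀ y : Fin (L + 1) → G, (∀ j ∈ I, y j ∈ M2) → ∀ a, a ∈ M2 →
      phi x I (Function.update y sI a) ∈ Δ :=
    fun y hy a ha => hval _ (hupdM2 y hy a ha)
  -- kernels
  have hKex : ∀ yv : {y : Fin (L + 1) → G // ∀ j ∈ I, y j ∈ M2}, ∃ K : Subgroup G,
      ∀ a : G, a ∈ K ↔ (a ∈ M2 ∧ phi x I (Function.update yv.1 sI a) = 1) := by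
    intro yv
    refine ⟨Subgroup.mk (Submonoid.mk (Subsemigroup.mk
      (setOf (fun a : G => a ∈ M2 ∧ phi x I (Function.update yv.1 sI a) = 1)) ?_) ?_) ?_,
      fun a => Iff.rfl⟩
    · rintro a b ⟨haM, haP⟩ ⟨hbM, hbP⟩
      exact ⟨M2.mul_mem haM hbM, by rw [hanti yv.1 yv.2 a b haM hbM, haP, hbP, one_mul]⟩
    · exact ⟨M2.one_mem, hpsi1 yv.1 yv.2⟩
    · rintro a ⟨haM, haP⟩
      exact ⟨M2.inv_mem haM, by rw [hpsiinv yv.1 yv.2 a haM, haP, inv_one]⟩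
  choose K hK using hKex
  have hKle : ∀ yv, K yv ≤ M2 := fun yv a ha => ((hK yv a).mp ha).1
  haveI hΔfinite : Finite ↥Δ := hfin.to_subtype
  have hKidx : ∀ yv, (K yv).index ≤ c * n2b ∧ (K yv).index ≠ 0 := by
    intro yv
    have hwd : ∀ a b : ↥M2, @Setoid.r _ (QuotientGroup.leftRel ((K yv).subgroupOf M2)) a b →
        phi x I (Function.update yv.1 sI (a : G)) = phi x I (Function.update yv.1 sI (b : G)) := by
      intro a b hab
      rw [QuotientGroup.leftRel_apply, Subgroup.mem_subgroupOf] at hab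
      have h1 := ((hK yv _).mp hab).2
      have hcoe : ((a⁻¹ * b : ↥M2) : G) = (a : G)⁻¹ * (b : G) := rfl
      rw [hcoe] at h1
      have h2 := hanti yv.1 yv.2 (a : G)⁻¹ (b : G) (M2.inv_mem a.2) b.2
      rw [h1, hpsiinv yv.1 yv.2 (a : G) a.2] at h2
      exact (mul_inv_eq_one.mp h2.symm).symm
    let F : (↥M2 ⧸ (K yv).subgroupOf M2) → ↥Δ := fun q => Quotient.liftOn' q
      (fun a : ↥M2 => (⟨phi x I (Function.update yv.1 sI (a : G)),
        hpsival yv.1 yv.2 _ a.2⟩ : ↥Δ))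
      (fun a b hab => Subtype.ext (hwd a b hab))
    have hFinj : Function.Injective F := by
      intro q1 q2
      refine Quotient.inductionOn₂' q1 q2 ?_
      intro a b h
      apply Quotient.sound'
      rw [QuotientGroup.leftRel_apply, Subgroup.mem_subgroupOf]
      have h' : phi x I (Function.update yv.1 sI (a : G)) =
          phi x I (Function.update yv.1 sI (b : G)) := Subtype.ext_iff.mp h
      rw [hK yv]
      refine ⟨M2.mul_mem (M2.inv_mem a.2) b.2, ?_⟩
      have h2 := hanti yv.1 yv.2 (a : G)⁻¹ (b : G) (M2.inv_mem a.2) b.2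
      rw [hpsiinv yv.1 yv.2 (a : G) a.2, ← h'] at h2
      have hcoe : ((a⁻¹ * b : ↥M2) : G) = (a : G)⁻¹ * (b : G) := rfl
      rw [hcoe, h2, mul_inv_cancel]
    have hrel1 : ((K yv).subgroupOf M2).index ≤ c := by
      rw [Subgroup.index_eq_card]
      refine (Nat.card_le_card_of_injective F hFinj).trans ?_
      rw [Nat.card_coe_set_eq]
      exact hcard
    have hrel0 : ((K yv).subgroupOf M2).index ≠ 0 := by
      haveI : Finite (↥M2 ⧸ (K yv).subgroupOf M2) := Finite.of_injective F hFinj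
      rw [Subgroup.index_eq_card]
      exact Nat.card_pos.ne'
    have hmul : (K yv).relIndex M2 * M2.index = (K yv).index :=
      Subgroup.relIndex_mul_index (hKle yv)
    constructor
    · rw [← hmul]
      exact Nat.mul_le_mul hrel1 hM2le
    · rw [← hmul]
      exact Nat.mul_ne_zero hrel0 hM2fi.index_ne_zero
  -- Schreier generators for M2
  obtain ⟨S, hScard, hSclos⟩ := hgen
  obtain ⟨T, hTcard, hTclos⟩ := Subgroup.exists_finset_card_le_mul M2 hSclos
  set Tg : Finset G := T.image Subtype.val with hTgdef
  have hTgcard : Tg.card ≤ n2b * r := by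
    refine (Finset.card_image_le).trans (hTcard.trans ?_)
    exact Nat.mul_le_mul hM2le hScard
  have hTgmem : ∀ g ∈ Tg, g ∈ M2 := by
    intro g hg
    rw [hTgdef, Finset.mem_image] at hg
    obtain ⟨t, _, rfl⟩ := hg
    exact t.2
  have hTgclos : Subgroup.closure (Tg : Set G) = M2 := by
    have h1 := congrArg (Subgroup.map M2.subtype) hTclos
    rw [MonoidHom.map_closure, ← MonoidHom.range_eq_map, Subgroup.range_subtype] at h1
    rw [hTgdef, Finset.coe_image]
    exact h1
  have hpsiext : ∀ y1 y2 : {y : Fin (L + 1) → G // ∀ j ∈ I, y j ∈ M2},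
      (∀ g ∈ Tg, phi x I (Function.update y1.1 sI g) = phi x I (Function.update y2.1 sI g)) →
      ∀ a, a ∈ M2 → phi x I (Function.update y1.1 sI a) = phi x I (Function.update y2.1 sI a) := by
    intro y1 y2 hagree a ha
    have ha' : a ∈ Subgroup.closure (Tg : Set G) := by rw [hTgclos]; exact ha
    refine Subgroup.closure_induction ?_ ?_ ?_ ?_ ha'
    · intro g hg; exact hagree g hg
    · rw [hpsi1 y1.1 y1.2, hpsi1 y2.1 y2.2]
    · intro p q hp hq ihp ihq
      rw [hTgclos] at hp hq
      rw [hanti y1.1 y1.2 p q hp hq, hanti y2.1 y2.2 p q hp hq, ihp, ihq]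
    · intro p hp ihp
      rw [hTgclos] at hp
      rw [hpsiinv y1.1 y1.2 p hp, hpsiinv y2.1 y2.2 p hp, ihp]
  -- counting distinct kernel subgroups
  set D : Finset G := hfin.toFinset with hDdef
  have hDcard : D.card ≤ c := by
    rw [hDdef, ← Set.ncard_eq_toFinset_card _ hfin]
    exact hcard
  have hΘmem : ∀ (yv : {y : Fin (L + 1) → G // ∀ j ∈ I, y j ∈ M2}) (g : ↥Tg),
      phi x I (Function.update yv.1 sI (g : G)) ∈ D := by
    intro yv g
    rw [hDdef, Set.Finite.mem_toFinset]
    exact hpsival yv.1 yv.2 _ (hTgmem _ g.2)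
  set Θ : {y : Fin (L + 1) → G // ∀ j ∈ I, y j ∈ M2} → (↥Tg → ↥D) :=
    fun yv g => ⟨phi x I (Function.update yv.1 sI (g : G)), hΘmem yv g⟩ with hΘdef
  set N3 : Subgroup G := ⨅ w : (↥Tg → ↥D),
    (if h : ∃ yv, Θ yv = w then K h.choose else ⊤) with hN3def
  have hKeq : ∀ y1 y2, Θ y1 = Θ y2 → K y1 = K y2 := by
    intro y1 y2 hEq
    have hagree : ∀ g ∈ Tg, phi x I (Function.update y1.1 sI g) =
        phi x I (Function.update y2.1 sI g) := by
      intro g hg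
      have h3 := congrFun hEq ⟨g, hg⟩
      rw [hΘdef] at h3
      exact Subtype.ext_iff.mp h3
    have hsame := hpsiext y1 y2 hagree
    ext a
    rw [hK y1, hK y2]
    exact ⟨fun ⟨h1, h2⟩ => ⟨h1, by rw [← hsame a h1]; exact h2⟩,
      fun ⟨h1, h2⟩ => ⟨h1, by rw [hsame a h1]; exact h2⟩⟩
  have hN3leK : ∀ yv, N3 ≤ K yv := by
    intro yv
    have hex : ∃ yv', Θ yv' = Θ yv := ⟨yv, rfl⟩
    have h1 : N3 ≤ (if h : ∃ yv', Θ yv' = Θ yv then K h.choose else ⊤) := by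
      rw [hN3def]
      exact iInf_le _ (Θ yv)
    rw [dif_pos hex] at h1
    rwa [hKeq hex.choose yv hex.choose_spec] at h1
  have hpieceidx : ∀ w : ↥Tg → ↥D,
      (if h : ∃ yv, Θ yv = w then K h.choose else ⊤).index ≤ c * n2b ∧
      (if h : ∃ yv, Θ yv = w then K h.choose else ⊤).index ≠ 0 := by
    intro w
    by_cases h : ∃ yv, Θ yv = w
    · rw [dif_pos h]
      exact hKidx h.choose
    · rw [dif_neg h, Subgroup.index_top]
      exact ⟨Nat.one_le_iff_ne_zero.mpr (Nat.mul_pos hc hn2bpos).ne', one_ne_zero⟩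
  have hN3idx : N3.index ≤ (c * n2b) ^ (c ^ (n2b * r)) := by
    rw [hN3def]
    refine (aux_index_iInf_le_pow _ (fun w => (hpieceidx w).1)).trans ?_
    refine Nat.pow_le_pow_right (Nat.one_le_iff_ne_zero.mpr (Nat.mul_pos hc hn2bpos).ne') ?_
    rw [Fintype.card_fun]
    calc (Fintype.card ↥D) ^ (Fintype.card ↥Tg)
        ≤ c ^ (Fintype.card ↥Tg) :=
          Nat.pow_le_pow_left (by rw [Fintype.card_coe]; exact hDcard) _
      _ ≤ c ^ (n2b * r) :=
          Nat.pow_le_pow_right hc (by rw [Fintype.card_coe]; exact hTgcard)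
  have hN3ne : N3.index ≠ 0 := by
    rw [hN3def]
    exact (Subgroup.finiteIndex_iInf (fun w => ⟨(hpieceidx w).2⟩)).index_ne_zero
  haveI hN3fi : N3.FiniteIndex := ⟨hN3ne⟩
  refine ⟨N3.normalCore, Subgroup.normalCore_normal N3, ?_, ?_, ?_⟩
  · exact Nat.pos_of_ne_zero (Subgroup.finiteIndex_normalCore N3).index_ne_zero
  · refine (aux_index_normalCore_le N3).trans ?_
    exact Nat.factorial_le hN3idx
  · intro y hy
    have hyv1 : {y : Fin (L + 1) → G // ∀ j ∈ I, y j ∈ M2} :=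
      ⟨fun _ => 1, fun j hj => M2.one_mem⟩
    have hMstarM2 : N3.normalCore ≤ M2 :=
      le_trans (Subgroup.normalCore_le N3) (le_trans (hN3leK hyv1) (hKle hyv1))
    have hyM2 : ∀ j ∈ I, y j ∈ M2 := fun j hj => hMstarM2 (hy j hj)
    have hsImem : y sI ∈ K ⟨y, hyM2⟩ :=
      (hN3leK ⟨y, hyM2⟩) ((Subgroup.normalCore_le N3) (hy sI (I.max'_mem hI)))
    have h2 := ((hK ⟨y, hyM2⟩ (y sI)).mp hsImem).2
    rw [Function.update_eq_self] at h2
    exact h2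

end ArXiv
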